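/- Let A ∈ ℝ^{n×n} be skew-symmetric, B ∈ ℝ^{(N−n)×n} arbitrary, M = [[A, −Bᵀ],[B, 0]] ∈ ℝ^{N×N}, and E = [Iₙ; 0] ∈ ℝ^{N×n}. Then exp(M)·E = E + B′ · 𝔄([[½A, Iₙ],[¼A² − BᵀB, ½A]]) · [Iₙ; ½A], where B′ = [[½A, Iₙ],[B, 0]] ∈ ℝ^{N×2n}, [Iₙ; ½A] ∈ ℝ^{2n×n}, and 𝔄(X) = Σ_{m=0}^∞ (1/(m+1)!) Xᵐ. In particular, computing the geodesic retraction on the Stiefel manifold only requires power series of 2n×2n matrices. -/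

import Mathlib

/-!
Writing `𝔄(X) = Σ_k Xᵏ/(k+1)!`, one has `exp M = 1 + 𝔄(M) M`, so
`exp(M) E = E + 𝔄(M) (M E)`. A block computation gives `M E = B′ [Iₙ; ½A]` and the
intertwining relation `M B′ = B′ X` for `X = [[½A, Iₙ],[¼A² − BᵀB, ½A]]`; hence
`Mᵏ B′ = B′ Xᵏ` for all `k`, and summing the series `𝔄(M) B′ = B′ 𝔄(X)`.
-/

open Matrix NormedSpace
open scoped Nat

theorem summable_inv_factorial_succ_smul_pow {𝕂 𝔸 : Type*} [RCLike 𝕂] [NormedRing 𝔸]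
    [NormedAlgebra 𝕂 𝔸] [CompleteSpace 𝔸] (x : 𝔸) :
    Summable fun k : ℕ => ((k + 1)! : 𝕂)⁻¹ • x ^ k := by
  refine .of_norm_bounded (norm_expSeries_summable' (𝕂 := 𝕂) x) fun k => ?_
  rw [norm_smul, norm_smul]
  gcongr
  simp only [norm_inv, RCLike.norm_natCast]
  gcongr
  exact k.le_succ

theorem exp_eq_one_add_tsum_mul {𝕂 𝔸 : Type*} [Field 𝕂] [CharZero 𝕂] [Ring 𝔸] [Algebra 𝕂 𝔸]
    [TopologicalSpace 𝔸] [IsTopologicalRing 𝔸] [T2Space 𝔸] (x : 𝔸)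
    (h : Summable fun k : ℕ => ((k + 1)! : 𝕂)⁻¹ • x ^ k) :
    exp x = 1 + (∑' k : ℕ, ((k + 1)! : 𝕂)⁻¹ • x ^ k) * x := by
  have hsucc : Summable fun k : ℕ => ((k + 1)! : 𝕂)⁻¹ • x ^ (k + 1) := by
    simpa only [pow_succ, smul_mul_assoc] using h.mul_right x
  rw [congrFun (exp_eq_tsum 𝕂) x,
    tsum_eq_zero_add' (f := fun k : ℕ => (k ! : 𝕂)⁻¹ • x ^ k) hsucc, ← h.tsum_mul_right]
  simp only [Nat.factorial_zero, Nat.cast_one, inv_one, pow_zero, one_smul, pow_succ,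
    smul_mul_assoc]

namespace Matrix

variable {l m n R : Type*} [Fintype m]

theorem summable_inv_factorial_succ_smul_pow {𝕂 : Type*} [RCLike 𝕂] [DecidableEq m]
    (X : Matrix m m 𝕂) : Summable fun k : ℕ => ((k + 1)! : 𝕂)⁻¹ • X ^ k := by
  -- Summability is topological, so any of the (equivalent) matrix norms will do.
  let _ : NormedRing (Matrix m m 𝕂) := Matrix.linftyOpNormedRing
  let _ : NormedAlgebra 𝕂 (Matrix m m 𝕂) := Matrix.linftyOpNormedAlgebra
  exact @_root_.summable_inv_factorial_succ_smul_pow 𝕂 (Matrix m m 𝕂) _ _ _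
    (FiniteDimensional.complete 𝕂 _) X

theorem pow_mul_eq_mul_pow_of_mul_eq_mul [Fintype n] [DecidableEq m] [DecidableEq n] [Semiring R]
    {M : Matrix m m R} {P : Matrix m n R} {X : Matrix n n R} (h : M * P = P * X) (k : ℕ) :
    M ^ k * P = P * X ^ k := by
  induction k with
  | zero => simp
  | succ k ih =>
    rw [pow_succ, Matrix.mul_assoc, h, ← Matrix.mul_assoc, ih, Matrix.mul_assoc, ← pow_succ]

section tsum

variable [Semiring R] [TopologicalSpace R] [IsTopologicalSemiring R] [T2Space R]

theorem tsum_mul {f : ℕ → Matrix l m R} (hf : Summable f) (P : Matrix m n R) :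
    (∑' k, f k) * P = ∑' k, f k * P :=
  (hf.hasSum.map (addMonoidHomMulRight P) (continuous_id.matrix_mul continuous_const)).tsum_eq.symm

theorem mul_tsum (P : Matrix l m R) {f : ℕ → Matrix m n R} (hf : Summable f) :
    P * ∑' k, f k = ∑' k, P * f k :=
  (hf.hasSum.map (addMonoidHomMulLeft P) (continuous_const.matrix_mul continuous_id)).tsum_eq.symm

end tsum

theorem tsum_smul_pow_mul_of_mul_eq_mul [Fintype n] [DecidableEq m] [DecidableEq n]
    [CommSemiring R] [TopologicalSpace R] [IsTopologicalSemiring R] [T2Space R] (c : ℕ → R)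
    {M : Matrix m m R} {P : Matrix m n R} {X : Matrix n n R} (h : M * P = P * X)
    (hM : Summable fun k => c k • M ^ k) (hX : Summable fun k => c k • X ^ k) :
    (∑' k, c k • M ^ k) * P = P * ∑' k, c k • X ^ k := by
  rw [tsum_mul hM, mul_tsum P hX]
  simp only [Matrix.smul_mul, Matrix.mul_smul, pow_mul_eq_mul_pow_of_mul_eq_mul h]

theorem exp_mul_eq_add_mul_tsum_mul {p q 𝕂 : Type*} [Fintype p] [DecidableEq m] [DecidableEq p]
    [RCLike 𝕂] {M : Matrix m m 𝕂} {P : Matrix m p 𝕂} {X : Matrix p p 𝕂} {E : Matrix m q 𝕂}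
    {C : Matrix p q 𝕂} (hMP : M * P = P * X) (hME : M * E = P * C) :
    exp M * E = E + (P * ∑' k : ℕ, ((k + 1)! : 𝕂)⁻¹ • X ^ k) * C := by
  have hM := summable_inv_factorial_succ_smul_pow M
  rw [exp_eq_one_add_tsum_mul M hM, Matrix.add_mul, Matrix.one_mul, Matrix.mul_assoc, hME,
    ← Matrix.mul_assoc, tsum_smul_pow_mul_of_mul_eq_mul _ hMP hM
      (summable_inv_factorial_succ_smul_pow X)]

end Matrix

theorem exp_ghor_apply_E_general (n m : ℕ)
    (A : Matrix (Fin n) (Fin n) ℝ) (B : Matrix (Fin m) (Fin n) ℝ) :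
    NormedSpace.exp (Matrix.fromBlocks A (-Bᵀ) B 0) *
        Matrix.fromRows (1 : Matrix (Fin n) (Fin n) ℝ) (0 : Matrix (Fin m) (Fin n) ℝ) =
      Matrix.fromRows (1 : Matrix (Fin n) (Fin n) ℝ) (0 : Matrix (Fin m) (Fin n) ℝ) +
        (Matrix.fromBlocks ((2 : ℝ)⁻¹ • A) 1 B 0 *
          (∑' k : ℕ, ((k + 1).factorial : ℝ)⁻¹ •
            (Matrix.fromBlocks ((2 : ℝ)⁻¹ • A) 1
              ((4 : ℝ)⁻¹ • (A * A) - Bᵀ * B) ((2 : ℝ)⁻¹ • A)) ^ k) :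
            Matrix (Fin n ⊕ Fin m) (Fin n ⊕ Fin n) ℝ) *
          Matrix.fromRows (1 : Matrix (Fin n) (Fin n) ℝ) ((2 : ℝ)⁻¹ • A) := by
  set M : Matrix (Fin n ⊕ Fin m) (Fin n ⊕ Fin m) ℝ := fromBlocks A (-Bᵀ) B 0
  set P : Matrix (Fin n ⊕ Fin m) (Fin n ⊕ Fin n) ℝ := fromBlocks ((2 : ℝ)⁻¹ • A) 1 B 0
  set X : Matrix (Fin n ⊕ Fin n) (Fin n ⊕ Fin n) ℝ :=
    fromBlocks ((2 : ℝ)⁻¹ • A) 1 ((4 : ℝ)⁻¹ • (A * A) - Bᵀ * B) ((2 : ℝ)⁻¹ • A)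
  have hMP : M * P = P * X := by
    rw [fromBlocks_multiply, fromBlocks_multiply, fromBlocks_inj]
    refine ⟨?_, ?_, ?_, ?_⟩ <;>
      simp only [Matrix.mul_smul, Matrix.smul_mul, Matrix.mul_one, Matrix.one_mul,
        Matrix.mul_zero, Matrix.zero_mul, Matrix.neg_mul, smul_smul] <;> module
  have hME : M * fromRows (1 : Matrix (Fin n) (Fin n) ℝ) (0 : Matrix (Fin m) (Fin n) ℝ) =
      P * fromRows (1 : Matrix (Fin n) (Fin n) ℝ) ((2 : ℝ)⁻¹ • A) := by
    rw [fromBlocks_mul_fromRows, fromBlocks_mul_fromRows, fromRows_ext_iff]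
    constructor <;>
      simp only [Matrix.mul_one, Matrix.mul_zero, Matrix.one_mul, Matrix.zero_mul,
        Matrix.mul_smul] <;> module
  exact exp_mul_eq_add_mul_tsum_mul hMP hME

/-- For `M = [[A, −Bᵀ],[B, 0]]` with `A` skew-symmetric and `E = [Iₙ; 0]`, one has
`exp(M)·E = E + B′ · 𝔄([[½A, Iₙ],[¼A² − BᵀB, ½A]]) · [Iₙ; ½A]`, where
`B′ = [[½A, Iₙ],[B, 0]]` and `𝔄(X) = Σ_{m≥0} (1/(m+1)!) Xᵐ`; hence the geodesic
retraction on the Stiefel manifold only requires power series of `2n×2n` matrices. -/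
theorem exp_ghor_apply_E (n m : ℕ)
    (A : Matrix (Fin n) (Fin n) ℝ) (B : Matrix (Fin m) (Fin n) ℝ) (hA : Aᵀ = -A) :
    NormedSpace.exp (Matrix.fromBlocks A (-Bᵀ) B 0) *
        Matrix.fromRows (1 : Matrix (Fin n) (Fin n) ℝ) (0 : Matrix (Fin m) (Fin n) ℝ) =
      Matrix.fromRows (1 : Matrix (Fin n) (Fin n) ℝ) (0 : Matrix (Fin m) (Fin n) ℝ) +
        (Matrix.fromBlocks ((2 : ℝ)⁻¹ • A) 1 B 0 *
          (∑' k : ℕ, ((k + 1).factorial : ℝ)⁻¹ •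
            (Matrix.fromBlocks ((2 : ℝ)⁻¹ • A) 1
              ((4 : ℝ)⁻¹ • (A * A) - Bᵀ * B) ((2 : ℝ)⁻¹ • A)) ^ k) :
            Matrix (Fin n ⊕ Fin m) (Fin n ⊕ Fin n) ℝ) *
          Matrix.fromRows (1 : Matrix (Fin n) (Fin n) ℝ) ((2 : ℝ)⁻¹ • A) :=
  exp_ghor_apply_E_general n m A B
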